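/- The family {a_n/√π}_{n ∈ ℤ} is an orthonormal (Hilbert) basis of L²(ℝ, ℂ): it is orthonormal and its closed linear span is all of L²(ℝ, ℂ). -/

import Mathlib

/-!
Substituting `t = tan θ` gives `(t - i)/(t + i) = -e^{2iθ}`, and the weighted pullback
`f ↦ (tan θ + i) f(tan θ)` is an isometry from `L²(ℝ)` into `L²(-π/2, π/2)` because
`|tan θ + i|² = 1 + tan² θ = dt/dθ`. It sends `aₙ` to `(-1)ⁿ e^{2inθ}`, so `⟪aₙ, f⟫` is `(-1)ⁿ π`
times the `n`-th Fourier coefficient of the pullback of `f` on an interval of length `π`.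
Orthogonality of the exponentials and Parseval's identity on that interval then give
orthonormality and completeness.
-/

open MeasureTheory Set Real
open Complex (I)
open scoped ComplexConjugate

noncomputable section

section L2

variable {α : Type*} [MeasurableSpace α] {μ : Measure α}

lemma MeasureTheory.MemLp.inner_toLp_left {f : α → ℂ} (hf : MemLp f 2 μ) (g : Lp ℂ 2 μ) :
    inner ℂ (hf.toLp f) g = ∫ x, conj (f x) * g x ∂μ := by
  rw [L2.inner_def]
  refine integral_congr_ae ?_
  filter_upwards [hf.coeFn_toLp] with x hx
  rw [hx, RCLike.inner_apply, mul_comm]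

lemma MeasureTheory.MemLp.inner_toLp_toLp {f g : α → ℂ} (hf : MemLp f 2 μ) (hg : MemLp g 2 μ) :
    inner ℂ (hf.toLp f) (hg.toLp g) = ∫ x, conj (f x) * g x ∂μ := by
  rw [hf.inner_toLp_left]
  refine integral_congr_ae ?_
  filter_upwards [hg.coeFn_toLp] with x hx
  rw [hx]

lemma MeasureTheory.Lp.eq_zero_of_integral_norm_sq_eq_zero {f : Lp ℂ 2 μ}
    (hf : ∫ x, ‖f x‖ ^ 2 ∂μ = 0) : f = 0 := by
  refine (inner_self_eq_zero (𝕜 := ℂ)).1 ?_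
  rw [L2.inner_def]
  simp_rw [RCLike.inner_apply (𝕜 := ℂ), Complex.mul_conj', ← Complex.ofReal_pow]
  rw [integral_complex_ofReal, hf, Complex.ofReal_zero]

end L2

section ChangeOfVariables

variable {E : Type*} [NormedAddCommGroup E] [NormedSpace ℝ E]

lemma hasDerivWithinAt_tan_Ioo {θ : ℝ} (hθ : θ ∈ Ioo (-(π / 2)) (π / 2)) :
    HasDerivWithinAt tan (cos θ ^ 2)⁻¹ (Ioo (-(π / 2)) (π / 2)) θ := by
  simpa [one_div] using (hasDerivAt_tan (cos_pos_of_mem_Ioo hθ).ne').hasDerivWithinAt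

theorem integral_comp_tan (g : ℝ → E) :
    ∫ t, g t = ∫ θ in Ioo (-(π / 2)) (π / 2), (cos θ ^ 2)⁻¹ • g (tan θ) := by
  have h := integral_image_eq_integral_abs_deriv_smul measurableSet_Ioo
    (fun _ hθ => hasDerivWithinAt_tan_Ioo hθ) injOn_tan g
  simpa only [image_tan_Ioo, Measure.restrict_univ, abs_inv, abs_pow, sq_abs] using h

theorem integrable_iff_integrableOn_comp_tan (g : ℝ → E) :
    Integrable g ↔
      IntegrableOn (fun θ => (cos θ ^ 2)⁻¹ • g (tan θ)) (Ioo (-(π / 2)) (π / 2)) := by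
  have h := integrableOn_image_iff_integrableOn_abs_deriv_smul measurableSet_Ioo
    (fun _ hθ => hasDerivWithinAt_tan_Ioo hθ) injOn_tan g
  simpa only [image_tan_Ioo, integrableOn_univ, abs_inv, abs_pow, sq_abs] using h

end ChangeOfVariables

lemma measurable_tan : Measurable tan := by
  rw [show tan = sin / cos from funext tan_eq_sin_div_cos]
  exact measurable_sin.div measurable_cos

lemma ofReal_add_I_ne_zero (t : ℝ) : (t : ℂ) + I ≠ 0 := by
  simp [Complex.ext_iff]

lemma norm_ofReal_add_I_sq (t : ℝ) : ‖(t : ℂ) + I‖ ^ 2 = 1 + t ^ 2 := by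
  rw [Complex.sq_norm]
  simpa [add_comm] using Complex.normSq_add_mul_I t 1

lemma norm_tan_add_I_sq {θ : ℝ} (hθ : cos θ ≠ 0) : ‖(tan θ : ℂ) + I‖ ^ 2 = (cos θ ^ 2)⁻¹ := by
  rw [norm_ofReal_add_I_sq, ← inv_one_add_tan_sq hθ, inv_inv]

def cayley (t : ℝ) : ℂ := ((t : ℂ) - I) / ((t : ℂ) + I)

lemma cayley_tan {θ : ℝ} (hθ : cos θ ≠ 0) : cayley (tan θ) = -Complex.exp (2 * θ * I) := by
  have hexp : Complex.exp (2 * θ * I) = ((cos θ : ℂ) + sin θ * I) ^ 2 := by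
    rw [Complex.ofReal_cos, Complex.ofReal_sin, ← Complex.exp_mul_I, ← Complex.exp_nat_mul]
    push_cast
    ring_nf
  rw [cayley, div_eq_iff (ofReal_add_I_ne_zero _), hexp, tan_eq_sin_div_cos, Complex.ofReal_div]
  have hc : (cos θ : ℂ) ≠ 0 := Complex.ofReal_ne_zero.2 hθ
  have h1 : (sin θ : ℂ) ^ 2 + (cos θ : ℂ) ^ 2 = 1 := by exact_mod_cast sin_sq_add_cos_sq θ
  field_simp
  linear_combination (I * cos θ - sin θ) * h1
    + (2 * cos θ ^ 2 * sin θ + sin θ ^ 3 + cos θ * sin θ ^ 2 * I) * Complex.I_sq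

lemma norm_cayley (t : ℝ) : ‖cayley t‖ = 1 := by
  have h : (t : ℂ) - I = conj ((t : ℂ) + I) := by simp [sub_eq_add_neg]
  rw [cayley, norm_div, h, Complex.norm_conj,
    div_self (norm_ne_zero_iff.2 (ofReal_add_I_ne_zero t))]

def malmquistTakenaka (n : ℤ) (t : ℝ) : ℂ :=
  ((t : ℂ) - I) ^ n / ((t : ℂ) + I) ^ (n + 1)

lemma malmquistTakenaka_eq_cayley_zpow_div (n : ℤ) (t : ℝ) :
    malmquistTakenaka n t = cayley t ^ n / ((t : ℂ) + I) := by
  rw [malmquistTakenaka, cayley, zpow_add_one₀ (ofReal_add_I_ne_zero t), div_zpow, div_div]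

def tanPullback (f : ℝ → ℂ) (θ : ℝ) : ℂ := ((tan θ : ℂ) + I) * f (tan θ)

lemma tanPullback_malmquistTakenaka (n : ℤ) {θ : ℝ} (hθ : cos θ ≠ 0) :
    tanPullback (malmquistTakenaka n) θ = (-1) ^ n * Complex.exp (2 * n * θ * I) := by
  rw [tanPullback, malmquistTakenaka_eq_cayley_zpow_div,
    mul_div_cancel₀ _ (ofReal_add_I_ne_zero _), cayley_tan hθ, neg_eq_neg_one_mul, mul_zpow,
    ← Complex.exp_int_mul]
  ring_nf

lemma conj_tanPullback_mul (f g : ℝ → ℂ) {θ : ℝ} (hθ : cos θ ≠ 0) :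
    conj (tanPullback f θ) * tanPullback g θ =
      (cos θ ^ 2)⁻¹ • (conj (f (tan θ)) * g (tan θ)) := by
  rw [tanPullback, tanPullback, map_mul, Complex.real_smul, ← norm_tan_add_I_sq hθ]
  push_cast
  rw [← Complex.conj_mul']
  ring

lemma norm_tanPullback_sq (f : ℝ → ℂ) {θ : ℝ} (hθ : cos θ ≠ 0) :
    ‖tanPullback f θ‖ ^ 2 = (cos θ ^ 2)⁻¹ • ‖f (tan θ)‖ ^ 2 := by
  rw [tanPullback, norm_mul, mul_pow, norm_tan_add_I_sq hθ, smul_eq_mul]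

theorem integral_conj_mul_eq_integral_tanPullback (f g : ℝ → ℂ) :
    ∫ t, conj (f t) * g t =
      ∫ θ in Ioo (-(π / 2)) (π / 2), conj (tanPullback f θ) * tanPullback g θ := by
  rw [integral_comp_tan]
  exact setIntegral_congr_fun measurableSet_Ioo fun θ hθ =>
    (conj_tanPullback_mul f g (cos_pos_of_mem_Ioo hθ).ne').symm

theorem integral_norm_sq_eq_integral_tanPullback (f : ℝ → ℂ) :
    ∫ t, ‖f t‖ ^ 2 = ∫ θ in Ioo (-(π / 2)) (π / 2), ‖tanPullback f θ‖ ^ 2 := by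
  rw [integral_comp_tan]
  exact setIntegral_congr_fun measurableSet_Ioo fun θ hθ =>
    (norm_tanPullback_sq f (cos_pos_of_mem_Ioo hθ).ne').symm

theorem memLp_tanPullback {f : ℝ → ℂ} (hfm : StronglyMeasurable f) (hf : MemLp f 2) :
    MemLp (tanPullback f) 2 (volume.restrict (Ioc (-(π / 2)) (π / 2))) := by
  have hm : Measurable (tanPullback f) :=
    (Complex.measurable_ofReal.comp measurable_tan).add_const I |>.mul
      (hfm.measurable.comp measurable_tan)
  refine (memLp_two_iff_integrable_sq_norm hm.aestronglyMeasurable).2 ?_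
  have hf2 := (memLp_two_iff_integrable_sq_norm hf.1).1 hf
  refine (integrableOn_Ioc_iff_integrableOn_Ioo ..).2 <|
    ((integrable_iff_integrableOn_comp_tan _).1 hf2).congr_fun
      (fun θ hθ => (norm_tanPullback_sq f (cos_pos_of_mem_Ioo hθ).ne').symm) measurableSet_Ioo

theorem integral_conj_malmquistTakenaka_mul (n : ℤ) (f : ℝ → ℂ) :
    ∫ t, conj (malmquistTakenaka n t) * f t =
      (-1) ^ n * ∫ θ in -(π / 2)..π / 2, Complex.exp (-(2 * n * θ * I)) * tanPullback f θ := by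
  rw [integral_conj_mul_eq_integral_tanPullback,
    intervalIntegral.integral_of_le (by linarith [pi_pos]), integral_Ioc_eq_integral_Ioo,
    ← integral_const_mul]
  refine setIntegral_congr_fun measurableSet_Ioo fun θ hθ => ?_
  rw [tanPullback_malmquistTakenaka n (cos_pos_of_mem_Ioo hθ).ne', map_mul, ← Complex.exp_conj]
  simp [mul_assoc, map_ofNat]

theorem integral_exp_two_mul_int_mul_I (k : ℤ) :
    ∫ θ in -(π / 2)..π / 2, Complex.exp (2 * k * θ * I) = if k = 0 then (π : ℂ) else 0 := by
  split_ifs with hk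
  · simp [hk]
  have hc : 2 * (k : ℂ) * I ≠ 0 := by simp [hk, Complex.I_ne_zero]
  simp_rw [show ∀ θ : ℝ, 2 * (k : ℂ) * θ * I = 2 * k * I * θ from fun θ => by ring]
  rw [integral_exp_mul_complex hc, div_eq_zero_iff, sub_eq_zero]
  left
  have hper : 2 * k * I * ((π / 2 : ℝ) : ℂ) =
      2 * k * I * ((-(π / 2) : ℝ) : ℂ) + k * (2 * π * I) := by
    push_cast
    ring
  rw [hper, Complex.exp_add, Complex.exp_int_mul_two_pi_mul_I, mul_one]

theorem integral_conj_malmquistTakenaka_mul_malmquistTakenaka (n m : ℤ) :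
    ∫ t, conj (malmquistTakenaka n t) * malmquistTakenaka m t =
      if n = m then (π : ℂ) else 0 := by
  rw [integral_conj_malmquistTakenaka_mul,
    intervalIntegral.integral_congr_Ioo_of_le (by linarith [pi_pos])
      (g := fun θ => (-1) ^ m * Complex.exp (2 * (m - n : ℤ) * θ * I)),
    intervalIntegral.integral_const_mul, integral_exp_two_mul_int_mul_I]
  · simp only [sub_eq_zero, eq_comm (a := m)]
    split_ifs with h
    · subst h
      rw [← mul_assoc, ← mul_zpow]
      norm_num
    · simp
  · intro θ hθ
    dsimp only
    rw [tanPullback_malmquistTakenaka m (cos_pos_of_mem_Ioo hθ).ne', mul_left_comm,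
      ← Complex.exp_add]
    push_cast
    ring_nf

theorem pi_mul_fourierCoeffOn (g : ℝ → ℂ) (n : ℤ) :
    π * fourierCoeffOn (neg_lt_self pi_div_two_pos) g n =
      ∫ θ in -(π / 2)..π / 2, Complex.exp (-(2 * n * θ * I)) * g θ := by
  have hπ : (π : ℂ) ≠ 0 := Complex.ofReal_ne_zero.2 pi_ne_zero
  have hcoef : (π : ℂ) * ((1 / (π / 2 - -(π / 2)) : ℝ) : ℂ) = 1 := by
    push_cast
    field_simp
    ring
  rw [fourierCoeffOn_eq_integral, Complex.real_smul, ← mul_assoc, hcoef, one_mul]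
  refine intervalIntegral.integral_congr fun θ _ => ?_
  rw [fourier_coe_apply, smul_eq_mul]
  congr 2
  push_cast
  field_simp
  ring

theorem hasSum_norm_integral_conj_malmquistTakenaka_mul_sq (f : Lp ℂ 2 (volume : Measure ℝ)) :
    HasSum (fun n : ℤ => ‖∫ t, conj (malmquistTakenaka n t) * f t‖ ^ 2) (π * ∫ t, ‖f t‖ ^ 2) := by
  have hπ : -(π / 2) < π / 2 := neg_lt_self pi_div_two_pos
  have hcoeff : ∀ n : ℤ, ‖∫ t, conj (malmquistTakenaka n t) * f t‖ ^ 2 =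
      π ^ 2 * ‖fourierCoeffOn hπ (tanPullback f) n‖ ^ 2 := fun n => by
    rw [integral_conj_malmquistTakenaka_mul, ← pi_mul_fourierCoeffOn]
    simp [mul_pow]
  have hnorm : π * ∫ t, ‖f t‖ ^ 2 =
      π ^ 2 * ((π / 2 - -(π / 2))⁻¹ • ∫ θ in -(π / 2)..π / 2, ‖tanPullback f θ‖ ^ 2) := by
    rw [intervalIntegral.integral_of_le (by linarith [pi_pos]), integral_Ioc_eq_integral_Ioo,
      ← integral_norm_sq_eq_integral_tanPullback, smul_eq_mul]
    field_simp
    ring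
  simpa only [hcoeff, hnorm] using (hasSum_sq_fourierCoeffOn hπ
    (memLp_tanPullback (Lp.stronglyMeasurable f) (Lp.memLp f))).mul_left (π ^ 2)

lemma measurable_malmquistTakenaka (n : ℤ) : Measurable (malmquistTakenaka n) := by
  unfold malmquistTakenaka
  fun_prop

lemma norm_malmquistTakenaka_sq (n : ℤ) (t : ℝ) :
    ‖malmquistTakenaka n t‖ ^ 2 = (1 + t ^ 2)⁻¹ := by
  rw [malmquistTakenaka_eq_cayley_zpow_div, norm_div, norm_zpow, norm_cayley, one_zpow, div_pow,
    norm_ofReal_add_I_sq, one_pow, one_div]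

lemma memLp_malmquistTakenaka (n : ℤ) : MemLp (malmquistTakenaka n) 2 (volume : Measure ℝ) :=
  (memLp_two_iff_integrable_sq_norm (measurable_malmquistTakenaka n).aestronglyMeasurable).2 <|
    integrable_inv_one_add_sq.congr (.of_forall fun t => (norm_malmquistTakenaka_sq n t).symm)

def malmquistTakenakaLp (n : ℤ) : Lp ℂ 2 (volume : Measure ℝ) :=
  ((Real.sqrt π : ℂ))⁻¹ • (memLp_malmquistTakenaka n).toLp (malmquistTakenaka n)

theorem orthonormal_malmquistTakenakaLp : Orthonormal ℂ malmquistTakenakaLp := by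
  rw [orthonormal_iff_ite]
  intro n m
  rw [malmquistTakenakaLp, malmquistTakenakaLp, inner_smul_left, inner_smul_right,
    MemLp.inner_toLp_toLp, integral_conj_malmquistTakenaka_mul_malmquistTakenaka, ← mul_assoc,
    Complex.conj_inv, Complex.conj_ofReal, ← mul_inv, ← Complex.ofReal_mul,
    mul_self_sqrt pi_pos.le]
  split_ifs
  · exact inv_mul_cancel₀ (Complex.ofReal_ne_zero.2 pi_ne_zero)
  · exact mul_zero _

theorem span_malmquistTakenakaLp_closure_eq_top :
    (Submodule.span ℂ (range malmquistTakenakaLp)).topologicalClosure = ⊤ := by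
  rw [Submodule.topologicalClosure_eq_top_iff, Submodule.eq_bot_iff]
  intro f hf
  have horth : ∀ n, ∫ t, conj (malmquistTakenaka n t) * f t = 0 := fun n => by
    have h := (Submodule.mem_orthogonal _ f).1 hf _ (Submodule.subset_span (mem_range_self n))
    rwa [malmquistTakenakaLp, inner_smul_left, MemLp.inner_toLp_left, mul_eq_zero,
      or_iff_right (by simpa using (sqrt_pos.2 pi_pos).ne')] at h
  have hsum := hasSum_norm_integral_conj_malmquistTakenaka_mul_sq f
  simp only [horth, norm_zero, ne_eq, OfNat.ofNat_ne_zero, not_false_eq_true, zero_pow] at hsum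
  refine Lp.eq_zero_of_integral_norm_sq_eq_zero ?_
  simpa [pi_ne_zero] using hsum.unique hasSum_zero

theorem stmt_5 (a : ℤ → ℝ → ℂ)
    (ha : ∀ (n : ℤ) (t : ℝ),
      a n t = ((t : ℂ) - Complex.I) ^ n / ((t : ℂ) + Complex.I) ^ (n + 1)) :
    ∃ h : ∀ n : ℤ, MemLp (a n) 2 (volume : Measure ℝ),
      Orthonormal ℂ (fun n : ℤ =>
        ((Real.sqrt Real.pi : ℂ))⁻¹ • ((h n).toLp (a n))) ∧
      (Submodule.span ℂ (Set.range (fun n : ℤ =>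
        ((Real.sqrt Real.pi : ℂ))⁻¹ • ((h n).toLp (a n))))).topologicalClosure = ⊤ := by
  obtain rfl : a = malmquistTakenaka := funext fun n => funext (ha n)
  exact ⟨memLp_malmquistTakenaka, orthonormal_malmquistTakenakaLp,
    span_malmquistTakenakaLp_closure_eq_top⟩
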